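/- arXiv:1202.5557 — 6 statements merged into one kernel-verified Lean document; each statement's English description precedes it below -/
import Mathlib

section
/- Let 𝔬 be the valuation ring of a field k with a non-Archimedean absolute value, with maximal ideal 𝔪 and residue field 𝔽. Let s ∈ PGL₂(k) be an element of finite order that has good reduction and whose reduction red(s) ∈ PGL₂(𝔽) is the identity. If 𝔽 has characteristic p > 0, then the order of s is a power of p; if 𝔽 has characteristic zero, then s is the identity. -/
open MvPolynomial

noncomputable section

/-- `PGL₂(R)`: the projective general linear group of 2×2 matrices. -/
abbrev PGL2 (R : Type*) [CommRing R] : Type _ :=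
  GL (Fin 2) R ⧸ Subgroup.center (GL (Fin 2) R)

/-- The class of an invertible matrix in `PGL₂`. -/
def PGL2.mk {R : Type*} [CommRing R] (M : GL (Fin 2) R) : PGL2 R :=
  QuotientGroup.mk M

/-- The pair of linear forms attached to a 2×2 matrix. -/
def linForms {R : Type*} [CommRing R] (M : Matrix (Fin 2) (Fin 2) R) :
    Fin 2 → MvPolynomial (Fin 2) R :=
  fun i => C (M i 0) * X 0 + C (M i 1) * X 1

/-- The matrix `M` conjugates the pair of binary forms `Φ` to `Ψ`,
i.e. `S ∘ Φ = λ · (Ψ ∘ S)` for some scalar `λ`, where `S` is the pair of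
linear forms of `M`.  This is the homogeneous form of `s ∘ φ ∘ s⁻¹ = ψ`. -/
def MatConj {R : Type*} [CommRing R] (Φ Ψ : Fin 2 → MvPolynomial (Fin 2) R)
    (M : GL (Fin 2) R) : Prop :=
  ∃ c : Rˣ, ∀ i,
    bind₁ Φ (linForms (M : Matrix (Fin 2) (Fin 2) R) i) =
      C (c : R) * bind₁ (linForms (M : Matrix (Fin 2) (Fin 2) R)) (Ψ i)

/-- `Conj_{φ,ψ}(R)`: the set of elements of `PGL₂(R)` conjugating `φ` to `ψ`. -/
def ConjSet {R : Type*} [CommRing R] (Φ Ψ : Fin 2 → MvPolynomial (Fin 2) R) :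
    Set (PGL2 R) :=
  {s | ∃ M : GL (Fin 2) R, PGL2.mk M = s ∧ MatConj Φ Ψ M}

/-- `Aut_φ(R)`: the automorphism group of `φ` inside `PGL₂(R)`. -/
def AutSet {R : Type*} [CommRing R] (Φ : Fin 2 → MvPolynomial (Fin 2) R) :
    Set (PGL2 R) :=
  ConjSet Φ Φ

/-- The valuation ring of a non-Archimedean absolute value. -/
def ValSubring {k : Type*} [Field k] (v : AbsoluteValue k ℝ)
    (hv : IsNonarchimedean v) : Subring k where
  carrier := {x | v x ≤ 1}
  one_mem' := by simp
  mul_mem' := by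
    intro a b ha hb
    have h := v.nonneg a
    have h' := v.nonneg b
    have ha' : v a ≤ 1 := ha
    have hb' : v b ≤ 1 := hb
    show v (a * b) ≤ 1
    rw [v.map_mul]
    nlinarith
  zero_mem' := by simp
  add_mem' := by
    intro a b ha hb
    exact le_trans (hv a b) (max_le ha hb)
  neg_mem' := by
    intro a ha
    show v (-a) ≤ 1
    rwa [v.map_neg]

/-- An element of `PGL₂(k)` has good reduction: it is represented by a matrix
with entries in the valuation ring whose determinant is a unit there. -/
def MatGoodRed {k : Type*} [Field k] (v : AbsoluteValue k ℝ)
    (hv : IsNonarchimedean v) (s : PGL2 k) : Prop :=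
  ∃ (M : GL (Fin 2) k) (N : Matrix (Fin 2) (Fin 2) (ValSubring v hv)),
    PGL2.mk M = s ∧
    (∀ i j, (N i j : k) = (M : Matrix (Fin 2) (Fin 2) k) i j) ∧
    IsUnit N.det

/-!
Let `p ^ m` be the `p`-part of the order of `s` (so `p ^ m = 1` in characteristic zero); it
suffices to show `s ^ p ^ m = 1`. The order `q` of `s ^ p ^ m` is prime to `p`, hence invertible
in `𝔽`, and `s ^ p ^ m` is represented by an integral matrix `C` reducing to a scalar `β ≠ 0`.
By Cayley–Hamilton `C ^ q = a C + b` with `a ≡ q β ^ (q - 1) ≢ 0` modulo `𝔪`, because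
`X ^ q ≡ q β ^ (q - 1) (X - β) + β ^ q` modulo `(X - β) ^ 2`. Since `C ^ q` is scalar and `a ≠ 0`,
`C` is scalar.
-/

namespace Matrix

theorem fin_two_sq_eq_trace_smul_sub_det_smul {R : Type*} [CommRing R]
    (C : Matrix (Fin 2) (Fin 2) R) : C ^ 2 = C.trace • C - C.det • 1 := by
  ext i j
  fin_cases i <;> fin_cases j <;>
    simp [sq, mul_apply, Fin.sum_univ_two, det_fin_two, trace_fin_two] <;> ring

theorem exists_pow_succ_eq_smul_add_smul_one {R S : Type*} [CommRing R] [CommRing S]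
    (f : R →+* S) {β : S} {C : Matrix (Fin 2) (Fin 2) R} (htr : f C.trace = 2 * β)
    (hdet : f C.det = β ^ 2) (n : ℕ) :
    ∃ a b : R, C ^ (n + 1) = a • C + b • 1 ∧
      f a = (n + 1) * β ^ n ∧ f b = -(n * β ^ (n + 1)) := by
  induction n with
  | zero => exact ⟨1, 0, by simp, by simp, by simp⟩
  | succ n ih =>
    obtain ⟨a, b, hC, ha, hb⟩ := ih
    refine ⟨a * C.trace + b, -(a * C.det), ?_, ?_, ?_⟩
    · rw [pow_succ, hC, add_mul, smul_mul, smul_mul, one_mul, ← sq,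
        fin_two_sq_eq_trace_smul_sub_det_smul]
      module
    · rw [map_add, map_mul, ha, hb, htr]
      push_cast
      ring
    · rw [map_neg, map_mul, ha, hdet]
      push_cast
      ring

theorem exists_map_eq_smul_one_of_map_pow {R K F : Type*} [CommRing R] [Field K] [CommRing F]
    [NoZeroDivisors F] {ι : R →+* K} (hι : Function.Injective ι) {π : R →+* F}
    {C : Matrix (Fin 2) (Fin 2) R} {β : F} (hβ : β ≠ 0) (hC : C.map π = β • 1)
    {q : ℕ} (hq : (q : F) ≠ 0) {c : K} (hCq : (C ^ q).map ι = c • 1) :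
    ∃ d : K, C.map ι = d • 1 := by
  have htr : π C.trace = 2 * β := by
    rw [AddMonoidHom.map_trace, hC, trace_smul, trace_one, Fintype.card_fin, smul_eq_mul]
    push_cast
    ring
  have hdet : π C.det = β ^ 2 := by
    rw [RingHom.map_det, RingHom.mapMatrix_apply, hC, det_smul, det_one, Fintype.card_fin,
      mul_one]
  obtain ⟨r, rfl⟩ := Nat.exists_eq_succ_of_ne_zero (show q ≠ 0 by rintro rfl; simp at hq)
  obtain ⟨a, b, hab, ha, -⟩ := exists_pow_succ_eq_smul_add_smul_one π htr hdet r
  have ha0 : ι a ≠ 0 := by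
    rw [map_ne_zero_iff ι hι]
    rintro rfl
    push_cast at hq
    exact mul_ne_zero hq (pow_ne_zero r hβ) (by rw [← ha, map_zero])
  refine ⟨(ι a)⁻¹ * (c - ι b), ?_⟩
  rw [hab, ← RingHom.mapMatrix_apply, _root_.map_add, RingHom.mapMatrix_apply,
    RingHom.mapMatrix_apply, map_smul' _ _ _ (map_mul ι), map_smul' _ _ _ (map_mul ι),
    Matrix.map_one _ (map_zero ι) (map_one ι)] at hCq
  rw [mul_smul, sub_smul, ← hCq, add_sub_cancel_right, inv_smul_smul₀ ha0]

end Matrix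

theorem CharP.cast_ordCompl_ne_zero {F : Type*} [Ring F] [NoZeroDivisors F] [Nontrivial F]
    {p n : ℕ} [CharP F p] (hn : n ≠ 0) : ((ordCompl[p] n : ℕ) : F) ≠ 0 := by
  rcases CharP.char_is_prime_or_zero F p with hp | rfl
  · rw [Ne, CharP.cast_eq_zero_iff F p]
    exact Nat.not_dvd_ordCompl hp hn
  · have := CharP.charP_to_charZero F
    rw [Nat.ordCompl_of_not_prime n 0 Nat.not_prime_zero]
    exact_mod_cast hn

theorem PGL2.mk_pow_eq_one_iff {R : Type*} [CommRing R] {M : GL (Fin 2) R} {j : ℕ} :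
    PGL2.mk M ^ j = 1 ↔ ∃ c : R, (M : Matrix (Fin 2) (Fin 2) R) ^ j = c • 1 := by
  rw [PGL2.mk, ← QuotientGroup.mk_pow, QuotientGroup.eq_one_iff,
    Matrix.GeneralLinearGroup.mem_center_iff_val_mem_range_scalar, Units.val_pow_eq_pow_val]
  simp [eq_comm, Matrix.smul_one_eq_diagonal, Matrix.scalar_apply]

theorem finite_order_trivial_reduction_general
    {k 𝔽 : Type*} [Field k] [Field 𝔽]
    (v : AbsoluteValue k ℝ) (hv : IsNonarchimedean v)
    (π : ValSubring v hv →+* 𝔽)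
    (s : PGL2 k) (hord : 0 < orderOf s)
    (M : GL (Fin 2) k) (N : Matrix (Fin 2) (Fin 2) (ValSubring v hv))
    (hM : PGL2.mk M = s)
    (hN : ∀ i j, (N i j : k) = (M : Matrix (Fin 2) (Fin 2) k) i j)
    (hdet : IsUnit N.det)
    (hredid : ∃ a : 𝔽, N.map π = a • (1 : Matrix (Fin 2) (Fin 2) 𝔽)) :
    ∀ p : ℕ, CharP 𝔽 p →
      (p ≠ 0 → ∃ m : ℕ, orderOf s = p ^ m) ∧ (p = 0 → s = 1) := by
  intro p hp
  obtain ⟨a, ha⟩ := hredid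
  set n := orderOf s
  have ha0 : a ≠ 0 := by
    rintro rfl
    have := hdet.map π
    rw [RingHom.map_det, RingHom.mapMatrix_apply, ha, zero_smul, Matrix.det_zero] at this
    exact not_isUnit_zero this
  have hNM : N.map (ValSubring v hv).subtype = M := Matrix.ext hN
  obtain ⟨c, hc⟩ := PGL2.mk_pow_eq_one_iff.1 (by rw [hM, pow_orderOf_eq_one] : PGL2.mk M ^ n = 1)
  have hred : (N ^ ordProj[p] n).map π = a ^ ordProj[p] n • 1 := by
    rw [Matrix.map_pow, ha, smul_pow, one_pow]
  have hpow : ((N ^ ordProj[p] n) ^ ordCompl[p] n).map (ValSubring v hv).subtype = c • 1 := by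
    rw [← pow_mul, Nat.ordProj_mul_ordCompl_eq_self, Matrix.map_pow, hNM, hc]
  obtain ⟨d, hd⟩ := Matrix.exists_map_eq_smul_one_of_map_pow Subtype.val_injective
    (pow_ne_zero _ ha0) hred (CharP.cast_ordCompl_ne_zero hord.ne') hpow
  have hdvd : n ∣ ordProj[p] n := orderOf_dvd_of_pow_eq_one <| by
    rw [← hM, PGL2.mk_pow_eq_one_iff]
    exact ⟨d, by rw [← hd, Matrix.map_pow, hNM]⟩
  refine ⟨fun hp0 => ?_, fun hp0 => ?_⟩
  · have hprime := (CharP.char_is_prime_or_zero 𝔽 p).resolve_right hp0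
    obtain ⟨m, -, hm⟩ := (Nat.dvd_prime_pow hprime).1 hdvd
    exact ⟨m, hm⟩
  · subst hp0
    simpa [Nat.factorization_zero_right, n] using hdvd

/-- an element of `PGL₂(k)` of finite order, with good reduction and
trivial reduction, has `p`-power order (resp. is trivial in residue characteristic 0). -/
theorem finite_order_trivial_reduction
    {k 𝔽 : Type*} [Field k] [Field 𝔽]
    (v : AbsoluteValue k ℝ) (hv : IsNonarchimedean v)
    (π : ValSubring v hv →+* 𝔽) (hπ : Function.Surjective π)
    (hker : ∀ x : ValSubring v hv, π x = 0 ↔ v (x : k) < 1)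
    (s : PGL2 k) (hord : 0 < orderOf s)
    (M : GL (Fin 2) k) (N : Matrix (Fin 2) (Fin 2) (ValSubring v hv))
    (hM : PGL2.mk M = s)
    (hN : ∀ i j, (N i j : k) = (M : Matrix (Fin 2) (Fin 2) k) i j)
    (hdet : IsUnit N.det)
    (hredid : ∃ a : 𝔽, N.map π = a • (1 : Matrix (Fin 2) (Fin 2) 𝔽)) :
    ∀ p : ℕ, CharP 𝔽 p →
      (p ≠ 0 → ∃ m : ℕ, orderOf s = p ^ m) ∧ (p = 0 → s = 1) :=
  finite_order_trivial_reduction_general v hv π s hord M N hM hN hdet hredid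
end
end

section
/- Let F be a field, let α ∈ F^× have multiplicative order n ≥ 2, and let φ ∈ F(z) be a nonconstant rational function satisfying φ(αz) = α·φ(z). Then there exists a rational function ψ ∈ F(z) such that φ(z)/z = ψ(z^n), and consequently deg(φ) equals n·deg(ψ) or n·deg(ψ) ± 1. -/
/-!
Coprimality of `f` and `g` turns `f(αz) g(z) = α f(z) g(αz)` into `g(αz) = c g(z)` and
`f(αz) = α c f(z)` for a constant `c`. Comparing coefficients, all exponents of `g` lie in the
residue class `r` mod `n` with `αʳ = c`, and those of `f` in the class `r + 1`. Since `f` and `g`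
are not both divisible by `z`, either `g(0) ≠ 0`, so `c = 1`, `f = z p(zⁿ)` and `g = q(zⁿ)`; or
`f(0) ≠ 0`, so `c = α⁻¹ = αⁿ⁻¹`, `f = p(zⁿ)` and `g = zⁿ⁻¹ q(zⁿ)`, and `ψ = p / (z q)`.
-/

open Polynomial

namespace Polynomial

section CommSemiring

variable {R : Type*} [CommSemiring R]

theorem coeff_comp_C_mul_X (p : R[X]) (a : R) (k : ℕ) :
    (p.comp (C a * X)).coeff k = a ^ k * p.coeff k := by
  induction p using Polynomial.induction_on' with
  | add p q hp hq => simp [add_comp, hp, hq, mul_add]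
  | monomial i c =>
    rw [monomial_comp, mul_pow, ← C_pow, ← mul_assoc, ← C_mul, coeff_C_mul, coeff_X_pow,
      coeff_monomial]
    by_cases h : i = k
    · subst h; simp [mul_comm]
    · simp [h, Ne.symm h]

theorem expand_contract_of_coeff_eq_zero {n : ℕ} (hn : n ≠ 0)
    {h : R[X]} (hh : ∀ k, ¬ n ∣ k → h.coeff k = 0) : expand R n (contract n h) = h := by
  ext k
  rw [coeff_expand (Nat.pos_of_ne_zero hn), coeff_contract hn]
  split_ifs with hk
  · rw [Nat.div_mul_cancel hk]
  · exact (hh k hk).symm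

theorem exists_eq_X_pow_mul_expand_of_coeff_ne_zero {n r : ℕ}
    (hr : r < n) {h : R[X]} (hh : ∀ k, h.coeff k ≠ 0 → k ≡ r [MOD n]) :
    ∃ p, h = X ^ r * expand R n p := by
  have hn : n ≠ 0 := by omega
  obtain ⟨h', rfl⟩ : X ^ r ∣ h := X_pow_dvd_iff.mpr fun d hd ↦ by
    by_contra hne
    have := hh d hne
    rw [Nat.ModEq, Nat.mod_eq_of_lt (hd.trans hr), Nat.mod_eq_of_lt hr] at this
    omega
  refine ⟨contract n h', congrArg _ (expand_contract_of_coeff_eq_zero hn fun k hk ↦ ?_).symm⟩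
  by_contra hne
  have := hh (k + r) (by rwa [mul_comm, coeff_mul_X_pow])
  exact hk (Nat.modEq_zero_iff_dvd.mp (Nat.ModEq.add_right_cancel' r (by simpa using this)))

theorem coeff_zero_ne_zero_or_of_isCoprime [Nontrivial R] {f g : R[X]} (hfg : IsCoprime f g) :
    f.coeff 0 ≠ 0 ∨ g.coeff 0 ≠ 0 := by
  by_contra! h
  exact not_isUnit_X (hfg.isUnit_of_dvd' (X_dvd_iff.mpr h.1) (X_dvd_iff.mpr h.2))

end CommSemiring

section IsDomain

variable {R : Type*} [CommRing R] [IsDomain R]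

theorem exists_eq_X_pow_mul_expand_of_comp_C_mul_X_eq {a : R} {r : ℕ} (hr : r < orderOf a)
    {h : R[X]} (hh : h.comp (C a * X) = C (a ^ r) * h) :
    ∃ p, h = X ^ r * expand R (orderOf a) p := by
  have ha : IsOfFinOrder a := orderOf_pos_iff.mp (by omega)
  refine exists_eq_X_pow_mul_expand_of_coeff_ne_zero hr fun k hk ↦ ?_
  have hpow : a ^ k * h.coeff k = a ^ r * h.coeff k := by
    rw [← coeff_comp_C_mul_X, hh, coeff_C_mul]
  exact ha.pow_inj_mod.mp (mul_right_cancel₀ hk hpow)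

theorem eq_one_of_comp_C_mul_X_eq_C_mul {a d : R} {h : R[X]} (h0 : h.coeff 0 ≠ 0)
    (hh : h.comp (C a * X) = C d * h) : d = 1 := by
  simpa [h0, coeff_comp_C_mul_X] using congrArg (coeff · 0) hh

end IsDomain

variable {K : Type*} [Field K]

theorem exists_comp_C_mul_X_eq_C_mul_of_dvd {a : K} (ha : a ≠ 0) {g : K[X]} (hg : g ≠ 0)
    (hdvd : g.comp (C a * X) ∣ g) : ∃ c, g.comp (C a * X) = C c * g := by
  obtain ⟨u, hu⟩ := associated_of_dvd_of_natDegree_le hdvd hg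
    (by rw [natDegree_comp, natDegree_C_mul_X a ha, mul_one])
  obtain ⟨c, hc, hcu⟩ := isUnit_iff.mp u.isUnit
  refine ⟨c⁻¹, ?_⟩
  conv_rhs => rw [← hu, ← hcu, mul_left_comm, ← C_mul, inv_mul_cancel₀ hc.ne_zero, C_1, mul_one]

theorem exists_comp_C_mul_X_eq_C_mul_of_isCoprime {f g : K[X]} (hfg : IsCoprime f g)
    (hg : g ≠ 0) {a b : K} (ha : a ≠ 0)
    (h : f.comp (C a * X) * g = C b * f * g.comp (C a * X)) :
    ∃ c, g.comp (C a * X) = C c * g ∧ f.comp (C a * X) = C (b * c) * f := by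
  have hcomp : IsCoprime (f.comp (C a * X)) (g.comp (C a * X)) := hfg.map (compRingHom _)
  obtain ⟨c, hc⟩ := exists_comp_C_mul_X_eq_C_mul_of_dvd ha hg
    (hcomp.symm.dvd_of_dvd_mul_left ⟨C b * f, by rw [h, mul_comm]⟩)
  refine ⟨c, hc, mul_right_cancel₀ hg ?_⟩
  rw [h, hc, C_mul]
  ring

theorem descent_of_eq_X_mul_expand {n : ℕ} (hn : n ≠ 0) {f g p q : K[X]} (hf : f ≠ 0)
    (hg : g ≠ 0) (hfg : IsCoprime f g) (hfp : f = X * expand K n p) (hgq : g = expand K n q) :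
    q ≠ 0 ∧ IsCoprime p q ∧ f * q.comp (X ^ n) = X * g * p.comp (X ^ n) ∧
      (max f.natDegree g.natDegree = n * max p.natDegree q.natDegree ∨
       max f.natDegree g.natDegree = n * max p.natDegree q.natDegree + 1) := by
  subst hfp hgq
  have hp : p ≠ 0 := by rintro rfl; simp at hf
  refine ⟨by rintro rfl; simp at hg, (isCoprime_expand hn).mp hfg.of_mul_left_right,
    by rw [← expand_eq_comp_X_pow, ← expand_eq_comp_X_pow]; ring, ?_⟩
  rw [natDegree_X_mul ((expand_ne_zero hn.bot_lt).mpr hp), natDegree_expand, natDegree_expand,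
    mul_comm p.natDegree, mul_comm q.natDegree, ← Nat.mul_max_mul_left]
  rcases le_or_gt q.natDegree p.natDegree with h | h
  · have := Nat.mul_le_mul_left n h
    omega
  · have : n * (p.natDegree + 1) ≤ n * q.natDegree := Nat.mul_le_mul_left n h
    rw [mul_add] at this
    omega

theorem descent_of_eq_expand {n : ℕ} (hn : n ≠ 0) {f g p q : K[X]} (hf0 : f.coeff 0 ≠ 0)
    (hg : g ≠ 0) (hfg : IsCoprime f g) (hfp : f = expand K n p)
    (hgq : g = X ^ (n - 1) * expand K n q) :
    X * q ≠ 0 ∧ IsCoprime p (X * q) ∧ f * (X * q).comp (X ^ n) = X * g * p.comp (X ^ n) ∧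
      (max f.natDegree g.natDegree = n * max p.natDegree (X * q).natDegree ∨
       max f.natDegree g.natDegree + 1 = n * max p.natDegree (X * q).natDegree) := by
  subst hfp hgq
  have hq : q ≠ 0 := by rintro rfl; simp at hg
  have hpX : IsCoprime p X := by
    refine ((irreducible_X.coprime_iff_not_dvd).mpr fun hX ↦ hf0 ?_).symm
    rw [coeff_expand hn.bot_lt, if_pos (dvd_zero n), Nat.zero_div, ← X_dvd_iff]
    exact hX
  refine ⟨mul_ne_zero X_ne_zero hq,
    hpX.mul_right ((isCoprime_expand hn).mp hfg.of_mul_right_right), ?_, ?_⟩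
  · rw [mul_comp, X_comp, ← expand_eq_comp_X_pow, ← expand_eq_comp_X_pow, ← mul_pow_sub_one hn]
    ring
  rw [natDegree_X_mul hq, natDegree_X_pow_mul (n - 1) ((expand_ne_zero hn.bot_lt).mpr hq),
    natDegree_expand, natDegree_expand, mul_comm p.natDegree, mul_comm q.natDegree,
    ← Nat.mul_max_mul_left, mul_add, mul_one]
  rcases le_or_gt (q.natDegree + 1) p.natDegree with h | h
  · have : n * (q.natDegree + 1) ≤ n * p.natDegree := Nat.mul_le_mul_left n h
    rw [mul_add] at this
    omega
  · have := Nat.mul_le_mul_left n (Nat.lt_succ_iff.mp h)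
    omega

end Polynomial

/-- if `φ(αz) = α·φ(z)` with `α` of multiplicative order `n ≥ 2`,
then `φ(z)/z = ψ(zⁿ)` for some rational function `ψ`, and
`deg φ ∈ {n·deg ψ, n·deg ψ ± 1}`.  Here `φ = f/g` and `ψ = p/q` with coprime
numerators and denominators. -/
theorem invariant_under_mul_root_of_unity
    {F : Type*} [Field F] (n : ℕ) (hn : 2 ≤ n)
    (α : Fˣ) (hα : orderOf α = n)
    (f g : Polynomial F) (hg : g ≠ 0) (hcop : IsCoprime f g)
    (hnc : 1 ≤ max f.natDegree g.natDegree)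
    (hcomm : f.comp (C (α : F) * X) * g = C (α : F) * f * g.comp (C (α : F) * X)) :
    ∃ p q : Polynomial F, q ≠ 0 ∧ IsCoprime p q ∧
      f * q.comp (X ^ n) = X * g * p.comp (X ^ n) ∧
      (max f.natDegree g.natDegree = n * max p.natDegree q.natDegree ∨
       max f.natDegree g.natDegree = n * max p.natDegree q.natDegree + 1 ∨
       max f.natDegree g.natDegree + 1 = n * max p.natDegree q.natDegree) := by
  rw [← orderOf_units] at hα
  subst hα
  obtain ⟨c, hgc, hfc⟩ := exists_comp_C_mul_X_eq_C_mul_of_isCoprime hcop hg α.ne_zero hcomm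
  rcases coeff_zero_ne_zero_or_of_isCoprime hcop with hf0 | hg0
  · have hαc : (α : F) * c = 1 := eq_one_of_comp_C_mul_X_eq_C_mul hf0 hfc
    have hcα : c = (α : F) ^ (orderOf (α : F) - 1) :=
      mul_left_cancel₀ α.ne_zero (by rw [hαc, mul_pow_sub_one (by omega), pow_orderOf_eq_one])
    obtain ⟨p, hp⟩ := exists_eq_X_pow_mul_expand_of_comp_C_mul_X_eq (r := 0) (by omega)
      (hfc.trans (by rw [hαc, pow_zero]))
    rw [hcα] at hgc
    obtain ⟨q, hq⟩ := exists_eq_X_pow_mul_expand_of_comp_C_mul_X_eq (by omega) hgc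
    rw [pow_zero, one_mul] at hp
    obtain ⟨hq0, hpq, heq, hdeg⟩ := descent_of_eq_expand (by omega) hf0 hg hcop hp hq
    exact ⟨p, X * q, hq0, hpq, heq, hdeg.imp_right Or.inr⟩
  · have hc : c = 1 := eq_one_of_comp_C_mul_X_eq_C_mul hg0 hgc
    have hf : f ≠ 0 := by
      rintro rfl
      simp [natDegree_eq_zero_of_isUnit (isCoprime_zero_left.mp hcop)] at hnc
    obtain ⟨p, hp⟩ := exists_eq_X_pow_mul_expand_of_comp_C_mul_X_eq (r := 1) (by omega)
      (hfc.trans (by rw [hc, mul_one, pow_one]))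
    obtain ⟨q, hq⟩ := exists_eq_X_pow_mul_expand_of_comp_C_mul_X_eq (r := 0) (by omega)
      (hgc.trans (by rw [hc, pow_zero]))
    rw [pow_one] at hp
    rw [pow_zero, one_mul] at hq
    obtain ⟨hq0, hpq, heq, hdeg⟩ := descent_of_eq_X_mul_expand (by omega) hf hg hcop hp hq
    exact ⟨p, q, hq0, hpq, heq, hdeg.imp_right Or.inl⟩
end

section
/- Let F be a field of prime characteristic p, and let φ ∈ F(z) be a nonconstant rational function satisfying φ(z + 1) = φ(z) + 1. Then there exists a rational function ψ ∈ F(z) such that φ(z) − z = ψ(z^p − z), and consequently deg(φ) equals p·deg(ψ) or p·deg(ψ) + 1. -/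
/-!
Clearing denominators, the hypothesis says that `φ(z) - z = (f - X g) / g`, a fraction in lowest
terms, is invariant under `z ↦ z + 1`; by coprimality its numerator and denominator are then
invariant themselves. In characteristic `p` the polynomial `ρ = X ^ p - X` is invariant, so division
by `ρ` turns an invariant polynomial into an invariant quotient of smaller degree and an invariant
remainder of degree `< p`; the remainder takes the same value at `0, 1, …, p - 1`, hence is
constant. By induction every invariant polynomial is a polynomial in `ρ`. Finally
`f = a(ρ) + X b(ρ)`, whose summands have degrees `≡ 0` and `≡ 1 (mod p)`, so no cancellation occurs
and `deg f = max (p deg a, p deg b + 1)`.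
-/

open Polynomial

namespace Polynomial

section CommRing

variable {R : Type*} [CommRing R]

lemma comp_X_add_one_eq_taylor (f : R[X]) : f.comp (X + 1) = taylor 1 f := by
  rw [taylor_apply, map_one]

lemma natDegree_X_pow_sub_X [Nontrivial R] {p : ℕ} (hp : 1 < p) :
    (X ^ p - X : R[X]).natDegree = p := by
  rw [natDegree_sub_eq_left_of_natDegree_lt] <;> simp [hp]

lemma monic_X_pow_sub_X [Nontrivial R] {p : ℕ} (hp : 1 < p) : (X ^ p - X : R[X]).Monic :=
  monic_X_pow_sub (degree_X_le.trans_lt (mod_cast hp))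

lemma taylor_one_X_pow_sub_X (p : ℕ) [Fact p.Prime] [CharP R p] :
    taylor 1 (X ^ p - X : R[X]) = X ^ p - X := by
  rw [map_sub, taylor_X_pow, taylor_X, map_one, add_pow_char, one_pow, add_sub_add_right_eq_sub]

lemma taylor_divByMonic_modByMonic {q : R[X]} (hq : q.Monic) {r : R} (hqr : taylor r q = q)
    (f : R[X]) : taylor r f /ₘ q = taylor r (f /ₘ q) ∧ taylor r f %ₘ q = taylor r (f %ₘ q) := by
  nontriviality R
  refine div_modByMonic_unique _ _ hq ⟨?_, ?_⟩
  · simpa only [map_add, taylor_mul, hqr] using congrArg (taylor r) (modByMonic_add_div f q)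
  · rw [degree_taylor]
    exact degree_modByMonic_lt f hq

end CommRing

section IsDomain

variable {R : Type*} [CommRing R] [IsDomain R]

lemma taylor_eq_self_of_isCoprime {r : R} {f g : R[X]} (hfg : IsCoprime f g) (hg : g ≠ 0)
    (h : taylor r f * g = f * taylor r g) : taylor r f = f ∧ taylor r g = g := by
  have hcop : IsCoprime (taylor r g) (taylor r f) := (hfg.map (taylorAlgHom r).toRingHom).symm
  have hdvd : taylor r g ∣ g := hcop.dvd_of_dvd_mul_left ⟨f, by linear_combination h⟩
  have hg' : taylor r g = g :=
    eq_of_dvd_of_natDegree_le_of_leadingCoeff hdvd (natDegree_taylor g r).ge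
      (leadingCoeff_taylor r g)
  rw [hg'] at h
  exact ⟨mul_right_cancel₀ hg h, hg'⟩

section CharP

variable (p : ℕ) [CharP R p]

lemma eq_C_of_taylor_one_eq_self {f : R[X]} (hf : taylor 1 f = f) (hdeg : f.natDegree < p) :
    f = C (f.eval 0) := by
  have heval : ∀ n : ℕ, f.eval (n : R) = f.eval 0 := by
    intro n
    induction n with
    | zero => rw [Nat.cast_zero]
    | succ n ih => rw [Nat.cast_succ, ← taylor_eval, hf, ih]
  refine eq_of_natDegree_lt_card_of_eval_eq f _ (f := fun i : Fin p ↦ ((i : ℕ) : R))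
    (fun i j hij ↦ Fin.ext (CharP.natCast_injOn_Iio R p i.isLt j.isLt hij))
    (fun i ↦ by rw [heval, eval_C]) (by simpa using hdeg)

theorem exists_eq_comp_X_pow_sub_X_of_taylor_one_eq_self [Fact p.Prime] (f : R[X])
    (hf : taylor 1 f = f) : ∃ g : R[X], f = g.comp (X ^ p - X) := by
  have hp := (Fact.out : p.Prime).one_lt
  have hρ := monic_X_pow_sub_X (R := R) hp
  obtain ⟨hdiv, hmod⟩ := taylor_divByMonic_modByMonic hρ (taylor_one_X_pow_sub_X p) f
  rw [hf] at hdiv hmod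
  have hρ1 : (X ^ p - X : R[X]) ≠ 1 :=
    ne_of_apply_ne natDegree (by rw [natDegree_X_pow_sub_X hp, natDegree_one]; omega)
  obtain ⟨c, hc⟩ : ∃ c, f %ₘ (X ^ p - X) = C c := ⟨_, eq_C_of_taylor_one_eq_self p hmod.symm
    ((natDegree_modByMonic_lt f hρ hρ1).trans_eq (natDegree_X_pow_sub_X hp))⟩
  have hf_eq := modByMonic_add_div f (X ^ p - X)
  by_cases h0 : f /ₘ (X ^ p - X) = 0
  · exact ⟨C c, by rw [← hf_eq, h0, hc, mul_zero, add_zero, C_comp]⟩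
  · obtain ⟨g, hg⟩ :=
      exists_eq_comp_X_pow_sub_X_of_taylor_one_eq_self (f /ₘ (X ^ p - X)) hdiv.symm
    refine ⟨C c + X * g, ?_⟩
    rw [← hf_eq, hc, hg, add_comp, mul_comp, C_comp, X_comp]
termination_by f.natDegree
decreasing_by
  exact natDegree_lt_natDegree h0 (degree_divByMonic_lt _ _
    (fun hf0 ↦ h0 (by rw [hf0, zero_divByMonic])) (hρ.degree_pos.mpr hρ1))

end CharP

lemma natDegree_comp_add_X_mul_comp {p : ℕ} (hp : 1 < p) (a : R[X]) {b : R[X]} (hb : b ≠ 0) :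
    (a.comp (X ^ p - X) + X * b.comp (X ^ p - X)).natDegree =
      max (p * a.natDegree) (p * b.natDegree + 1) := by
  have hbρ : b.comp (X ^ p - X) ≠ 0 := by
    rwa [← leadingCoeff_ne_zero, leadingCoeff_comp (by rw [natDegree_X_pow_sub_X hp]; omega),
      (monic_X_pow_sub_X hp).leadingCoeff, one_pow, mul_one, leadingCoeff_ne_zero]
  have ha : (a.comp (X ^ p - X)).natDegree = p * a.natDegree := by
    rw [natDegree_comp, natDegree_X_pow_sub_X hp, mul_comm]
  have hb : (X * b.comp (X ^ p - X)).natDegree = p * b.natDegree + 1 := by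
    rw [natDegree_X_mul hbρ, natDegree_comp, natDegree_X_pow_sub_X hp, mul_comm]
  have hne : p * a.natDegree ≠ p * b.natDegree + 1 := by
    intro h
    have : p ∣ 1 := (Nat.dvd_add_right (dvd_mul_right p _)).mp (h ▸ dvd_mul_right p _)
    exact hp.ne' (Nat.dvd_one.mp this)
  rcases hne.lt_or_gt with hlt | hlt
  · rw [natDegree_add_eq_right_of_natDegree_lt (ha ▸ hb ▸ hlt), hb, max_eq_right hlt.le]
  · rw [natDegree_add_eq_left_of_natDegree_lt (ha ▸ hb ▸ hlt), ha, max_eq_left hlt.le]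

end IsDomain

lemma isCoprime_of_isCoprime_comp {K : Type*} [Field K] {a b q : K[X]} (hq : 0 < q.natDegree)
    (h : IsCoprime (a.comp q) (b.comp q)) : IsCoprime a b := by
  refine isCoprime_of_dvd _ _ ?_ fun d hd hd0 hda hdb ↦ hd ?_
  · rintro ⟨rfl, rfl⟩
    rw [zero_comp, isCoprime_zero_left] at h
    exact not_isUnit_zero h
  · have hu := h.isUnit_of_dvd' (_root_.map_dvd (compRingHom q) hda)
      (_root_.map_dvd (compRingHom q) hdb)
    have hdeg := natDegree_eq_zero_of_isUnit hu
    rw [coe_compRingHom_apply, natDegree_comp, mul_eq_zero, or_iff_left hq.ne'] at hdeg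
    exact isUnit_iff_degree_eq_zero.mpr ((degree_eq_iff_natDegree_eq hd0).mpr hdeg)

end Polynomial

lemma max_mul_mul_add_one_eq_mul_max_or {p : ℕ} (hp : 0 < p) (m n : ℕ) :
    max (p * m) (p * n + 1) = p * max m n ∨ max (p * m) (p * n + 1) = p * max m n + 1 := by
  rcases lt_or_ge n m with h | h
  · left
    rw [max_eq_left h.le, max_eq_left (Nat.mul_lt_mul_left hp |>.mpr h)]
  · right
    rw [max_eq_right h, max_eq_right ((Nat.mul_le_mul_left p h).trans (Nat.le_succ _))]

theorem invariant_under_translation_char_p_general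
    {F : Type*} [Field F] (p : ℕ) (hp : p.Prime) [CharP F p]
    (f g : Polynomial F) (hg : g ≠ 0) (hcop : IsCoprime f g)
    (hcomm : f.comp (X + 1) * g = (f + g) * g.comp (X + 1)) :
    ∃ u q : Polynomial F, q ≠ 0 ∧ IsCoprime u q ∧
      (f - X * g) * q.comp (X ^ p - X) = g * u.comp (X ^ p - X) ∧
      (max f.natDegree g.natDegree = p * max u.natDegree q.natDegree ∨
       max f.natDegree g.natDegree = p * max u.natDegree q.natDegree + 1) := by
  have : Fact p.Prime := ⟨hp⟩
  have hN : taylor 1 (f - X * g) * g = (f - X * g) * taylor 1 g := by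
    simp only [comp_X_add_one_eq_taylor] at hcomm
    rw [map_sub, taylor_mul, taylor_X, map_one]
    linear_combination hcomm
  have hcopN : IsCoprime (f - X * g) g := IsCoprime.sub_mul_right_left_iff.mpr hcop
  obtain ⟨hNinv, hginv⟩ := taylor_eq_self_of_isCoprime hcopN hg hN
  obtain ⟨a, ha⟩ := exists_eq_comp_X_pow_sub_X_of_taylor_one_eq_self p _ hNinv
  obtain ⟨b, rfl⟩ := exists_eq_comp_X_pow_sub_X_of_taylor_one_eq_self p g hginv
  have hb : b ≠ 0 := by
    rintro rfl
    exact hg zero_comp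
  have hf : f = a.comp (X ^ p - X) + X * b.comp (X ^ p - X) := by
    rw [← ha]
    ring
  have hρ : 0 < (X ^ p - X : F[X]).natDegree := by
    rw [natDegree_X_pow_sub_X hp.one_lt]
    exact hp.pos
  refine ⟨a, b, hb, isCoprime_of_isCoprime_comp hρ (ha ▸ hcopN), by rw [ha, mul_comm], ?_⟩
  rw [hf, natDegree_comp_add_X_mul_comp hp.one_lt a hb, natDegree_comp,
    natDegree_X_pow_sub_X hp.one_lt, mul_comm b.natDegree,
    max_eq_left (le_max_of_le_right (Nat.le_succ _))]
  exact max_mul_mul_add_one_eq_mul_max_or hp.pos _ _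

/-- in characteristic `p`, if `φ(z + 1) = φ(z) + 1` then
`φ(z) − z = ψ(z^p − z)` for some rational function `ψ`, and
`deg φ ∈ {p·deg ψ, p·deg ψ + 1}`.  Here `φ = f/g` and `ψ = p/q` with coprime
numerators and denominators. -/
theorem invariant_under_translation_char_p
    {F : Type*} [Field F] (p : ℕ) (hp : p.Prime) [CharP F p]
    (f g : Polynomial F) (hg : g ≠ 0) (hcop : IsCoprime f g)
    (hnc : 1 ≤ max f.natDegree g.natDegree)
    (hcomm : f.comp (X + 1) * g = (f + g) * g.comp (X + 1)) :
    ∃ u q : Polynomial F, q ≠ 0 ∧ IsCoprime u q ∧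
      (f - X * g) * q.comp (X ^ p - X) = g * u.comp (X ^ p - X) ∧
      (max f.natDegree g.natDegree = p * max u.natDegree q.natDegree ∨
       max f.natDegree g.natDegree = p * max u.natDegree q.natDegree + 1) :=
  invariant_under_translation_char_p_general p hp f g hg hcop hcomm
end

section
/- Let K be a number field with ring of integers O_K, and let 𝔟 be a nonzero fractional ideal of O_K, written as a quotient 𝔟 = 𝔟⁺/𝔟⁻ of relatively prime integral ideals. Then H_K(b) ≥ N(𝔟⁺) for every nonzero b ∈ 𝔟, where N denotes the absolute norm of an integral ideal. -/
open NumberField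
open scoped nonZeroDivisors

/-!
Write `b = x / y` with `x, y ∈ 𝓞 K`. Since `b 𝔟⁻ ⊆ 𝔟⁺`, we get `x 𝔟⁻ ⊆ 𝔟⁺ y`, and coprimality of
`𝔟⁺` and `𝔟⁻` upgrades this to `(x) ⊆ 𝔟⁺ (x, y)`. Taking norms,
`N(𝔟⁺) N(x, y) ≤ |N(x)| = ∏_w |x|_w^{m_w} ≤ ∏_w max(|x|_w, |y|_w)^{m_w}`, and dividing by `N(x, y)`
gives the bound, since the height of `(x : y)` is exactly this product divided by `N(x, y)`.
-/

/-- The relative multiplicative height `H_K` of a projective point with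
coordinates in the ring of integers. -/
noncomputable def heightVec {K : Type*} [Field K] [NumberField K]
    {ι : Type*} [Fintype ι] [Nonempty ι] (x : ι → 𝓞 K) : ℝ :=
  (∏ w : InfinitePlace K,
      (Finset.univ.sup' Finset.univ_nonempty
        fun i => w (algebraMap (𝓞 K) K (x i))) ^ w.mult) /
    (Ideal.absNorm (Ideal.span (Set.range x)) : ℝ)

namespace Ideal

theorem span_singleton_mul_le_of_mem_coeIdeal_div {R K : Type*} [CommRing R] [IsDomain R]
    [Field K] [Algebra R K] [IsFractionRing R K] {I J : Ideal R} {x y : R} {b : K}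
    (hb : b ∈ (I : FractionalIdeal R⁰ K) / J)
    (hxy : algebraMap R K x = b * algebraMap R K y) :
    span {x} * J ≤ I * span {y} := by
  by_cases hJ : (J : FractionalIdeal R⁰ K) = 0
  · rw [FractionalIdeal.coeIdeal_eq_zero.mp hJ, mul_bot]
    exact bot_le
  refine span_singleton_mul_le_iff.mpr fun m hm => ?_
  obtain ⟨p, hp, hpm⟩ := (FractionalIdeal.mem_coeIdeal _).mp <|
    (FractionalIdeal.mem_div_iff_of_ne_zero hJ).mp hb _ (FractionalIdeal.mem_coeIdeal_of_mem _ hm)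
  have hxm : x * m = p * y := IsFractionRing.injective R K <| by
    rw [map_mul, map_mul, hxy, hpm]
    ring
  rw [hxm]
  exact mul_mem_mul hp (mem_span_singleton_self y)

theorem le_mul_sup_of_mul_le_of_isCoprime {R : Type*} [CommSemiring R] {I J A C : Ideal R}
    (hIJ : IsCoprime I J) (h : A * J ≤ I * C) : A ≤ I * (A ⊔ C) :=
  calc A = A * (I ⊔ J) := by rw [isCoprime_iff_sup_eq.mp hIJ, mul_top]
    _ = A * I ⊔ A * J := mul_sup A I J
    _ ≤ I * A ⊔ I * C := sup_le_sup (mul_comm A I).le h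
    _ = I * (A ⊔ C) := (mul_sup I A C).symm

theorem absNorm_mul_le_of_span_singleton_le {S : Type*} [CommRing S]
    [IsDedekindDomain S] [Module.Free ℤ S] [Module.Finite ℤ S] {I J : Ideal S} {x : S}
    (hx : x ≠ 0) (h : span {x} ≤ I * J) :
    absNorm I * absNorm J ≤ absNorm (span {x}) := by
  rw [← map_mul]
  refine Nat.le_of_dvd (Nat.pos_of_ne_zero ?_) (absNorm_dvd_absNorm_of_le h)
  exact absNorm_ne_zero_of_nonZeroDivisors
    ⟨span {x}, mem_nonZeroDivisors_of_ne_zero (by simpa using hx)⟩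

end Ideal

namespace NumberField

variable {K : Type*} [Field K] [NumberField K]

theorem prod_infinitePlace_pow_mult_eq_absNorm_span (x : 𝓞 K) :
    ∏ w : InfinitePlace K, w (algebraMap (𝓞 K) K x) ^ w.mult =
      (Ideal.absNorm (Ideal.span {x}) : ℝ) := by
  rw [InfinitePlace.prod_eq_abs_norm, Ideal.absNorm_span_singleton, ← Algebra.coe_norm_int,
    Nat.cast_natAbs]
  push_cast
  rfl

theorem absNorm_le_heightVec {ι : Type*} [Fintype ι] [Nonempty ι] {v : ι → 𝓞 K}
    {I : Ideal (𝓞 K)} (i : ι) (hi : v i ≠ 0)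
    (h : Ideal.span {v i} ≤ I * Ideal.span (Set.range v)) :
    (Ideal.absNorm I : ℝ) ≤ heightVec v := by
  have hnorm := Ideal.absNorm_mul_le_of_span_singleton_le hi h
  have hspan : 0 < (Ideal.absNorm (Ideal.span (Set.range v)) : ℝ) := by
    refine Nat.cast_pos.mpr (Nat.pos_of_ne_zero fun h0 => hi ?_)
    rw [Ideal.absNorm_eq_zero_iff, Ideal.span_eq_bot] at h0
    exact h0 _ (Set.mem_range_self i)
  rw [heightVec, le_div_iff₀ hspan]
  calc (Ideal.absNorm I : ℝ) * Ideal.absNorm (Ideal.span (Set.range v))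
      ≤ Ideal.absNorm (Ideal.span {v i}) := by exact_mod_cast hnorm
    _ = ∏ w : InfinitePlace K, w (algebraMap (𝓞 K) K (v i)) ^ w.mult :=
      (prod_infinitePlace_pow_mult_eq_absNorm_span (v i)).symm
    _ ≤ _ := by
      gcongr with w
      exact Finset.le_sup' (fun j => w (algebraMap (𝓞 K) K (v j))) (Finset.mem_univ i)

end NumberField

/-- The height of `b = x / y` is the height of the point `(x : y) ∈ ℙ¹(K)`. -/
theorem height_lower_bound_of_fractional_ideal_general
    {K : Type*} [Field K] [NumberField K]
    (bp bm : Ideal (𝓞 K)) (hcop : IsCoprime bp bm)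
    (𝔟 : FractionalIdeal (𝓞 K)⁰ K)
    (h𝔟 : 𝔟 = (bp : FractionalIdeal (𝓞 K)⁰ K) / (bm : FractionalIdeal (𝓞 K)⁰ K))
    (b : K) (hb : b ∈ 𝔟) (hb0 : b ≠ 0)
    (x y : 𝓞 K)
    (hxy : algebraMap (𝓞 K) K x / algebraMap (𝓞 K) K y = b) :
    (Ideal.absNorm bp : ℝ) ≤ heightVec ![x, y] := by
  obtain ⟨hx, hy⟩ : algebraMap (𝓞 K) K x ≠ 0 ∧ algebraMap (𝓞 K) K y ≠ 0 := by
    simpa [← hxy, not_or] using hb0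
  have hxby : algebraMap (𝓞 K) K x = b * algebraMap (𝓞 K) K y := by
    rw [← hxy, div_mul_cancel₀ _ hy]
  have hdiv := Ideal.span_singleton_mul_le_of_mem_coeIdeal_div (h𝔟 ▸ hb) hxby
  refine NumberField.absNorm_le_heightVec 0 (by simpa using hx) ?_
  have hrange : Set.range ![x, y] = {x, y} := by
    rw [Matrix.range_cons, Matrix.range_cons, Matrix.range_empty, Set.union_empty,
      Set.singleton_union]
  rw [hrange, Ideal.span_insert]
  exact Ideal.le_mul_sup_of_mul_le_of_isCoprime hcop hdiv

/-- if `𝔟 = 𝔟⁺/𝔟⁻` is a nonzero fractional ideal written as a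
quotient of coprime integral ideals, then `H_K(b) ≥ N(𝔟⁺)` for every nonzero
`b ∈ 𝔟`.  The height of `b = x/y` is the height of the point `(x : y) ∈ ℙ¹(K)`. -/
theorem height_lower_bound_of_fractional_ideal
    {K : Type*} [Field K] [NumberField K]
    (bp bm : Ideal (𝓞 K)) (hcop : IsCoprime bp bm)
    (𝔟 : FractionalIdeal (𝓞 K)⁰ K) (h𝔟0 : 𝔟 ≠ 0)
    (h𝔟 : 𝔟 = (bp : FractionalIdeal (𝓞 K)⁰ K) / (bm : FractionalIdeal (𝓞 K)⁰ K))
    (b : K) (hb : b ∈ 𝔟) (hb0 : b ≠ 0)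
    (x y : 𝓞 K) (hy : y ≠ 0)
    (hxy : algebraMap (𝓞 K) K x / algebraMap (𝓞 K) K y = b) :
    (Ideal.absNorm bp : ℝ) ≤ heightVec ![x, y] :=
  height_lower_bound_of_fractional_ideal_general bp bm hcop 𝔟 h𝔟 b hb hb0 x y hxy
end

section
/- Let K be a number field with ring of integers O_K, let 𝔞 ⊂ O_K be a nonzero integral ideal, and let ρ_𝔞 : ℙⁿ(O_K) → ℙⁿ(O_K/𝔞) denote the canonical projection. Then for each point b ∈ ℙⁿ(O_K/𝔞), there is at most one point a ∈ ρ_𝔞⁻¹(b) with H_K(a) < (2^{−[K:ℚ]} · N(𝔞))^{1/2}. -/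
open NumberField

set_option synthInstance.maxHeartbeats 400000
set_option maxHeartbeats 1000000

section Aux

variable {K : Type*} [Field K] {n : ℕ}

private lemma exists_ne_zero_of_span_top (x : Fin (n + 1) → 𝓞 K)
    (hx : Ideal.span (Set.range x) = ⊤) : ∃ i, x i ≠ 0 := by
  by_contra h
  push_neg at h
  have hb : Ideal.span (Set.range x) = ⊥ := by
    rw [Ideal.span_eq_bot]
    rintro y ⟨i, rfl⟩
    exact h i
  rw [hx] at hb
  exact absurd hb (by simp)

variable [NumberField K]

private lemma heightVec_eq (x : Fin (n + 1) → 𝓞 K)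
    (hx : Ideal.span (Set.range x) = ⊤) :
    heightVec x = ∏ w : InfinitePlace K,
      (Finset.univ.sup' Finset.univ_nonempty
        fun i => w (algebraMap (𝓞 K) K (x i))) ^ w.mult := by
  rw [heightVec, hx, Ideal.absNorm_top, Nat.cast_one, div_one]

end Aux

/-- given a nonzero integral ideal `𝔞`, any two points of
`ℙⁿ(O_K)` (given by primitive integral coordinate vectors) with the same image
under the canonical projection `ρ_𝔞 : ℙⁿ(O_K) → ℙⁿ(O_K/𝔞)` and height
`< (2^{-[K:ℚ]} N(𝔞))^{1/2}` coincide; i.e. each fibre of `ρ_𝔞` contains at most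
one point of such height. -/
theorem at_most_one_small_lift
    {K : Type*} [Field K] [NumberField K] (n : ℕ)
    (𝔞 : Ideal (𝓞 K)) (h𝔞 : 𝔞 ≠ 0)
    (a a' : Fin (n + 1) → 𝓞 K)
    (ha : Ideal.span (Set.range a) = ⊤)
    (ha' : Ideal.span (Set.range a') = ⊤)
    (hred : ∃ u : (𝓞 K ⧸ 𝔞)ˣ, ∀ i,
      Ideal.Quotient.mk 𝔞 (a i) = (u : 𝓞 K ⧸ 𝔞) * Ideal.Quotient.mk 𝔞 (a' i))
    (hHa : heightVec a < Real.sqrt ((Ideal.absNorm 𝔞 : ℝ) / 2 ^ Module.finrank ℚ K))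
    (hHa' : heightVec a' < Real.sqrt ((Ideal.absNorm 𝔞 : ℝ) / 2 ^ Module.finrank ℚ K)) :
    ∃ c : Kˣ, ∀ i, algebraMap (𝓞 K) K (a i) = (c : K) * algebraMap (𝓞 K) K (a' i) := by
  classical
  set D := Module.finrank ℚ K with hD
  set A : InfinitePlace K → ℝ := fun w =>
    Finset.univ.sup' Finset.univ_nonempty fun i => w (algebraMap (𝓞 K) K (a i)) with hA
  set A' : InfinitePlace K → ℝ := fun w =>
    Finset.univ.sup' Finset.univ_nonempty fun i => w (algebraMap (𝓞 K) K (a' i)) with hA'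
  have hA0 : ∀ w, 0 ≤ A w := fun w =>
    le_trans (apply_nonneg w _) (Finset.le_sup'
      (fun i => w (algebraMap (𝓞 K) K (a i))) (Finset.mem_univ (0 : Fin (n + 1))))
  have hA'0 : ∀ w, 0 ≤ A' w := fun w =>
    le_trans (apply_nonneg w _) (Finset.le_sup'
      (fun i => w (algebraMap (𝓞 K) K (a' i))) (Finset.mem_univ (0 : Fin (n + 1))))
  have hHaeq : heightVec a = ∏ w : InfinitePlace K, A w ^ w.mult := heightVec_eq a ha
  have hHa'eq : heightVec a' = ∏ w : InfinitePlace K, A' w ^ w.mult := heightVec_eq a' ha'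
  have hHa0 : 0 ≤ heightVec a := by
    rw [hHaeq]; exact Finset.prod_nonneg fun w _ => pow_nonneg (hA0 w) _
  have hHa'0 : 0 ≤ heightVec a' := by
    rw [hHa'eq]; exact Finset.prod_nonneg fun w _ => pow_nonneg (hA'0 w) _
  -- Key claim: all 2×2 minors vanish.
  have key : ∀ i j, a i * a' j - a j * a' i = 0 := by
    intro i j
    by_contra hd
    set d : 𝓞 K := a i * a' j - a j * a' i with hdd
    -- d ∈ 𝔞
    obtain ⟨u, hu⟩ := hred
    have hmem : d ∈ 𝔞 := by
      rw [← Ideal.Quotient.eq_zero_iff_mem]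
      have : Ideal.Quotient.mk 𝔞 d =
          Ideal.Quotient.mk 𝔞 (a i) * Ideal.Quotient.mk 𝔞 (a' j) -
          Ideal.Quotient.mk 𝔞 (a j) * Ideal.Quotient.mk 𝔞 (a' i) := by
        rw [hdd, map_sub, map_mul, map_mul]
      rw [this, hu i, hu j]
      ring
    have hdvd : Ideal.absNorm 𝔞 ∣ Ideal.absNorm (Ideal.span {d}) :=
      Ideal.absNorm_dvd_absNorm_of_le ((Ideal.span_singleton_le_iff_mem _).mpr hmem)
    have hne : Ideal.absNorm (Ideal.span {d}) ≠ 0 := by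
      rw [Ne, Ideal.absNorm_eq_zero_iff, Ideal.span_singleton_eq_bot]
      exact hd
    have hle : Ideal.absNorm 𝔞 ≤ Ideal.absNorm (Ideal.span {d}) :=
      Nat.le_of_dvd (Nat.pos_of_ne_zero hne) hdvd
    have hnorm : (Ideal.absNorm (Ideal.span {d}) : ℝ) =
        ∏ w : InfinitePlace K, w (algebraMap (𝓞 K) K d) ^ w.mult := by
      rw [InfinitePlace.prod_eq_abs_norm, Ideal.absNorm_span_singleton,
        ← Algebra.coe_norm_int]
      push_cast [Nat.cast_natAbs]
      ring
    -- bound each factor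
    have hbound : ∀ w : InfinitePlace K,
        w (algebraMap (𝓞 K) K d) ≤ 2 * (A w * A' w) := by
      intro w
      have hmap : algebraMap (𝓞 K) K d =
          algebraMap (𝓞 K) K (a i) * algebraMap (𝓞 K) K (a' j) -
          algebraMap (𝓞 K) K (a j) * algebraMap (𝓞 K) K (a' i) := by
        simp [hdd]
      have h1 : w (algebraMap (𝓞 K) K (a i)) ≤ A w :=
        Finset.le_sup' (fun i => w (algebraMap (𝓞 K) K (a i))) (Finset.mem_univ i)
      have h2 : w (algebraMap (𝓞 K) K (a j)) ≤ A w :=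
        Finset.le_sup' (fun i => w (algebraMap (𝓞 K) K (a i))) (Finset.mem_univ j)
      have h1' : w (algebraMap (𝓞 K) K (a' i)) ≤ A' w :=
        Finset.le_sup' (fun i => w (algebraMap (𝓞 K) K (a' i))) (Finset.mem_univ i)
      have h2' : w (algebraMap (𝓞 K) K (a' j)) ≤ A' w :=
        Finset.le_sup' (fun i => w (algebraMap (𝓞 K) K (a' i))) (Finset.mem_univ j)
      calc w (algebraMap (𝓞 K) K d)
          ≤ w (algebraMap (𝓞 K) K (a i) * algebraMap (𝓞 K) K (a' j)) +
            w (algebraMap (𝓞 K) K (a j) * algebraMap (𝓞 K) K (a' i)) := by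
            rw [hmap]; exact w.1.sub_le_add _ _
        _ = w (algebraMap (𝓞 K) K (a i)) * w (algebraMap (𝓞 K) K (a' j)) +
            w (algebraMap (𝓞 K) K (a j)) * w (algebraMap (𝓞 K) K (a' i)) := by
            rw [map_mul, map_mul]
        _ ≤ A w * A' w + A w * A' w := by
            gcongr <;> first | exact apply_nonneg w _ | exact hA0 w | exact hA'0 w | assumption
        _ = 2 * (A w * A' w) := by ring
    have hprod : ∏ w : InfinitePlace K, (w (algebraMap (𝓞 K) K d)) ^ w.mult ≤
        ∏ w : InfinitePlace K, (2 * (A w * A' w)) ^ w.mult := by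
      refine Finset.prod_le_prod (fun w _ => pow_nonneg (apply_nonneg w _) _) ?_
      intro w _
      exact pow_le_pow_left₀ (apply_nonneg w _) (hbound w) _
    have hsplit : ∏ w : InfinitePlace K, (2 * (A w * A' w)) ^ w.mult =
        2 ^ D * (heightVec a * heightVec a') := by
      rw [hHaeq, hHa'eq]
      simp_rw [mul_pow]
      rw [Finset.prod_mul_distrib, Finset.prod_mul_distrib,
        Finset.prod_pow_eq_pow_sum, InfinitePlace.sum_mult_eq, hD]
    -- now derive the contradiction
    have hNle : (Ideal.absNorm 𝔞 : ℝ) ≤ 2 ^ D * (heightVec a * heightVec a') := by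
      calc (Ideal.absNorm 𝔞 : ℝ) ≤ (Ideal.absNorm (Ideal.span {d}) : ℝ) := by
            exact_mod_cast hle
        _ = ∏ w : InfinitePlace K, w (algebraMap (𝓞 K) K d) ^ w.mult := hnorm
        _ ≤ ∏ w : InfinitePlace K, (2 * (A w * A' w)) ^ w.mult := hprod
        _ = 2 ^ D * (heightVec a * heightVec a') := hsplit
    have hsq : heightVec a * heightVec a' < (Ideal.absNorm 𝔞 : ℝ) / 2 ^ D := by
      have hss : Real.sqrt ((Ideal.absNorm 𝔞 : ℝ) / 2 ^ D) *
          Real.sqrt ((Ideal.absNorm 𝔞 : ℝ) / 2 ^ D) = (Ideal.absNorm 𝔞 : ℝ) / 2 ^ D :=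
        Real.mul_self_sqrt (div_nonneg (Nat.cast_nonneg _) (by positivity))
      calc heightVec a * heightVec a'
          < Real.sqrt ((Ideal.absNorm 𝔞 : ℝ) / 2 ^ D) *
            Real.sqrt ((Ideal.absNorm 𝔞 : ℝ) / 2 ^ D) :=
            mul_lt_mul'' hHa hHa' hHa0 hHa'0
        _ = (Ideal.absNorm 𝔞 : ℝ) / 2 ^ D := hss
    have h2D : (0 : ℝ) < 2 ^ D := by positivity
    have : (Ideal.absNorm 𝔞 : ℝ) < 2 ^ D * ((Ideal.absNorm 𝔞 : ℝ) / 2 ^ D) := by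
      calc (Ideal.absNorm 𝔞 : ℝ) ≤ 2 ^ D * (heightVec a * heightVec a') := hNle
        _ < 2 ^ D * ((Ideal.absNorm 𝔞 : ℝ) / 2 ^ D) := by
            exact mul_lt_mul_of_pos_left hsq h2D
    rw [mul_div_cancel₀ _ (ne_of_gt h2D)] at this
    exact lt_irrefl _ this
  -- proportionality
  obtain ⟨j, hj⟩ := exists_ne_zero_of_span_top a' ha'
  have haj : a j ≠ 0 := by
    intro h0
    have hall : ∀ i, a i = 0 := by
      intro i
      have hk := key i j
      rw [h0, zero_mul, sub_zero] at hk
      exact (mul_eq_zero.mp hk).resolve_right hj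
    obtain ⟨i, hi⟩ := exists_ne_zero_of_span_top a ha
    exact hi (hall i)
  have hjK : algebraMap (𝓞 K) K (a' j) ≠ 0 := RingOfIntegers.coe_ne_zero_iff.mpr hj
  have hajK : algebraMap (𝓞 K) K (a j) ≠ 0 := RingOfIntegers.coe_ne_zero_iff.mpr haj
  refine ⟨Units.mk0 (algebraMap (𝓞 K) K (a j) / algebraMap (𝓞 K) K (a' j))
    (div_ne_zero hajK hjK), fun i => ?_⟩
  have hk := key i j
  have hkK : algebraMap (𝓞 K) K (a i) * algebraMap (𝓞 K) K (a' j) =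
      algebraMap (𝓞 K) K (a j) * algebraMap (𝓞 K) K (a' i) := by
    have := congrArg (algebraMap (𝓞 K) K) hk
    rw [map_sub, map_mul, map_mul, map_zero, sub_eq_zero] at this
    exact this
  rw [Units.val_mk0]
  field_simp
  linear_combination hkK
end

section
/- Let F be an algebraically closed field and let φ ∈ F(z) be a rational function of degree d ≥ 2, with fixed-point set Fix(φ) ⊂ ℙ¹(F). Then: (a) if #Fix(φ) = 2, then #φ⁻¹(Fix(φ)) ≥ 3; and (b) if Fix(φ) = {x} is a single point, then #φ⁻¹(x) ≥ 2 and #φ⁻²(x) ≥ 3. Consequently the set T_φ, defined to be Fix(φ) if #Fix(φ) ≥ 3, φ⁻¹(Fix(φ)) if #Fix(φ) = 2, and φ⁻²(Fix(φ)) if #Fix(φ) = 1, always has cardinality at least 3. -/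
/-!
Write `φ = [Φ₀ : Φ₁]` with coprime binary forms of degree `d`. The fixed points of `φ` are the
zeros of the form `X₁Φ₀ - X₀Φ₁` of degree `d + 1`, and the preimages of `[w]` are the zeros of the
form `w₁Φ₀ - w₀Φ₁` of degree `d`. Over an algebraically closed field, a binary form whose only zero
is `[w]` is a multiple of `L_wⁿ`, where `L_w` is the linear form vanishing at `w`. Because
`L_w Φᵢ = Xᵢ (w₁Φ₀ - w₀Φ₁) - wᵢ (X₁Φ₀ - X₀Φ₁)`, the square `L_w²` cannot divide both of these
forms, since `L_w` would then divide `Φ₀` and `Φ₁`. So for `d ≥ 2` a unique fixed point `x` is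
not the only preimage of itself.

If there are exactly two fixed points `x` and `y` and each is its own only preimage, the two fibre
forms are `c L_xᵈ` and `c' L_yᵈ`. Then `L_y (c L_xᵈ) - L_x (c' L_yᵈ)` is a nonzero multiple of the
fixed-point form, so every zero of `c L_xᵈ⁻¹ - c' L_yᵈ⁻¹`, a form of positive degree that
vanishes at neither `x` nor `y`, is a third fixed point.
-/

open MvPolynomial

noncomputable section

open scoped Classical in
/-- The projective line over a field. -/
noncomputable abbrev P1 (F : Type*) [Field F] : Type _ :=
  Projectivization F (Fin 2 → F)

open scoped Classical in
/-- The self-map of `ℙ¹(F)` induced by a pair of binary forms (with a junk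
value at any point where both forms would vanish). -/
noncomputable def evalMap {F : Type*} [Field F]
    (Φ : Fin 2 → MvPolynomial (Fin 2) F) (p : P1 F) : P1 F :=
  if h : (fun i => MvPolynomial.eval p.rep (Φ i)) ≠ 0 then
    Projectivization.mk F _ h
  else p

/-- The set of fixed points of `φ` in `ℙ¹(F)`. -/
noncomputable def FixSet {F : Type*} [Field F]
    (Φ : Fin 2 → MvPolynomial (Fin 2) F) : Set (P1 F) :=
  {p | evalMap Φ p = p}

open scoped Classical in
/-- The invariant set `T_φ`: the fixed points if there are at least three of
them, their first preimages if there are exactly two, and their second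
preimages if there is exactly one. -/
noncomputable def Tset {F : Type*} [Field F]
    (Φ : Fin 2 → MvPolynomial (Fin 2) F) : Set (P1 F) :=
  if 3 ≤ (FixSet Φ).ncard then FixSet Φ
  else if (FixSet Φ).ncard = 2 then evalMap Φ ⁻¹' FixSet Φ
  else (evalMap Φ)^[2] ⁻¹' FixSet Φ

/-- The Möbius action of an invertible matrix on `ℙ¹(F)`. -/
noncomputable def mobius {F : Type*} [Field F] (g : GL (Fin 2) F)
    (p : P1 F) : P1 F :=
  Projectivization.map (Matrix.toLin' (g : Matrix (Fin 2) (Fin 2) F))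
    (by
      intro x y hxy
      haveI : Invertible (g : Matrix (Fin 2) (Fin 2) F) := g.invertible
      have h : ((g : Matrix (Fin 2) (Fin 2) F))⁻¹ *
          (g : Matrix (Fin 2) (Fin 2) F) = 1 :=
        Matrix.nonsing_inv_mul _ (Matrix.isUnit_det_of_invertible _)
      have hx := congrArg
        (fun z => ((g⁻¹ : GL (Fin 2) F) : Matrix (Fin 2) (Fin 2) F).mulVec z) hxy
      simpa only [Matrix.toLin'_apply, Matrix.mulVec_mulVec, Matrix.coe_units_inv, h,
        Matrix.one_mulVec] using hx) p

lemma MvPolynomial.IsHomogeneous.eval_smul {R σ : Type*} [CommSemiring R]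
    {P : MvPolynomial σ R} {n : ℕ} (hP : P.IsHomogeneous n) (t : R) (v : σ → R) :
    eval (t • v) P = t ^ n * eval v P := by
  simp only [eval_eq, Finset.mul_sum, Pi.smul_apply, smul_eq_mul, mul_pow,
    Finset.prod_mul_distrib, Finset.prod_pow_eq_pow_sum]
  refine Finset.sum_congr rfl fun s hs => ?_
  rw [← hP.degree_eq_sum_deg_support hs]
  ring

lemma MvPolynomial.IsHomogeneous.eq_C_coeff_zero {R σ : Type*} [CommSemiring R]
    {P : MvPolynomial σ R} (hP : P.IsHomogeneous 0) : P = C (coeff 0 P) :=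
  totalDegree_eq_zero_iff_eq_C.mp ((totalDegree_zero_iff_isHomogeneous _).mpr hP)

namespace BinaryForm

variable {F : Type*} [Field F] {m n : ℕ} {G H : MvPolynomial (Fin 2) F} {v w : Fin 2 → F}

def linFormVanishingAt (w : Fin 2 → F) : MvPolynomial (Fin 2) F :=
  C (w 1) * X 0 - C (w 0) * X 1

scoped notation "L" => linFormVanishingAt

lemma eval_linFormVanishingAt : eval v (L w) = w 1 * v 0 - w 0 * v 1 := by
  simp [linFormVanishingAt]

lemma eval_linFormVanishingAt_self : eval w (L w) = 0 := by
  rw [eval_linFormVanishingAt, mul_comm, sub_self]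

lemma isHomogeneous_linFormVanishingAt (w : Fin 2 → F) : (L w).IsHomogeneous 1 :=
  (isHomogeneous_C_mul_X _ _).sub (isHomogeneous_C_mul_X _ _)

lemma linFormVanishingAt_ne_zero (hw : w ≠ 0) : L w ≠ 0 := by
  intro h
  apply hw
  have h0 := congrArg (eval ![0, 1]) h
  have h1 := congrArg (eval ![1, 0]) h
  simp only [eval_linFormVanishingAt, map_zero] at h0 h1
  ext i; fin_cases i <;> simp_all

lemma not_isUnit_linFormVanishingAt (w : Fin 2 → F) : ¬IsUnit (L w) := fun h => by
  simpa [eval_linFormVanishingAt_self] using h.map (eval w)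

lemma mk_eq_mk_iff_eval_linFormVanishingAt (hv : v ≠ 0) (hw : w ≠ 0) :
    Projectivization.mk F v hv = Projectivization.mk F w hw ↔ eval v (L w) = 0 := by
  rw [Projectivization.mk_eq_mk_iff', eval_linFormVanishingAt]
  constructor
  · rintro ⟨a, rfl⟩
    simp only [Pi.smul_apply, smul_eq_mul]
    ring
  · intro h
    rcases ne_or_eq (w 0) 0 with h0 | h0
    · refine ⟨v 0 / w 0, funext fun i => ?_⟩
      fin_cases i
      · simp [h0]
      · simp only [Fin.mk_one, Pi.smul_apply, smul_eq_mul]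
        field_simp
        linear_combination h
    · have h1 : w 1 ≠ 0 := fun h1 => hw (by ext i; fin_cases i <;> simp [h0, h1])
      refine ⟨v 1 / w 1, funext fun i => ?_⟩
      fin_cases i
      · simp only [Fin.zero_eta, Pi.smul_apply, smul_eq_mul]
        field_simp
        linear_combination -h
      · simp [h1]

def dehomogenize (G : MvPolynomial (Fin 2) F) : Polynomial F :=
  aeval ![Polynomial.X, 1] G

lemma natDegree_dehomogenize_le (hG : G.IsHomogeneous n) : (dehomogenize G).natDegree ≤ n := by
  rw [dehomogenize, G.as_sum, map_sum]
  refine Polynomial.natDegree_sum_le_of_forall_le _ _ fun s hs => ?_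
  have hs0 : s 0 ≤ n := by
    rw [← hG (mem_support_iff.mp hs)]
    exact (Finsupp.le_degree 0 s).trans_eq (DFunLike.congr_fun Finsupp.degree_eq_weight_one s)
  rw [aeval_monomial, Finsupp.prod_fintype _ _ (by simp), Fin.prod_univ_two]
  simp only [Fin.isValue, Matrix.cons_val_zero, Matrix.cons_val_one, Matrix.cons_val_fin_one,
    one_pow, mul_one, Polynomial.algebraMap_eq]
  exact Polynomial.natDegree_C_mul_X_pow_le _ _ |>.trans hs0

lemma homogenize_dehomogenize (hG : G.IsHomogeneous n) : (dehomogenize G).homogenize n = G :=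
  Polynomial.homogenize_eq_of_isHomogeneous hG rfl

lemma eval_dehomogenize (hG : G.IsHomogeneous n) (t : F) :
    (dehomogenize G).eval t = eval ![t, 1] G := by
  conv_rhs => rw [← homogenize_dehomogenize hG]
  rw [Polynomial.eval_homogenize (natDegree_dehomogenize_le hG) _ (by simp)]
  simp

private lemma exists_eq_linFormVanishingAt_mul_of_ne_zero (hG : G.IsHomogeneous (m + 1))
    (hw : w 1 ≠ 0) (h : eval w G = 0) : ∃ H, H.IsHomogeneous m ∧ G = L w * H := by
  set t := w 0 / w 1
  have hroot : (dehomogenize G).IsRoot t := by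
    have hwt : w = w 1 • ![t, 1] := by ext i; fin_cases i <;> simp [t, mul_div_cancel₀ _ hw]
    rw [hwt, hG.eval_smul] at h
    rw [Polynomial.IsRoot, eval_dehomogenize hG]
    exact (mul_eq_zero.mp h).resolve_left (pow_ne_zero _ hw)
  set q := dehomogenize G /ₘ (Polynomial.X - Polynomial.C t)
  have hq : q.natDegree ≤ m := by
    rw [Polynomial.natDegree_divByMonic _ (Polynomial.monic_X_sub_C t),
      Polynomial.natDegree_X_sub_C]
    have := natDegree_dehomogenize_le hG
    omega
  refine ⟨C (w 1)⁻¹ * q.homogenize m, (Polynomial.isHomogeneous_homogenize q).C_mul _, ?_⟩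
  have hfac : G = (X 0 - C t * X 1) * q.homogenize m := by
    rw [← homogenize_dehomogenize hG, ← Polynomial.mul_divByMonic_eq_iff_isRoot.mpr hroot,
      add_comm, Polynomial.homogenize_mul _ _ (Polynomial.natDegree_X_sub_C t).le hq]
    simp
  have e1 : C (w 1) * C (w 1)⁻¹ = (1 : MvPolynomial (Fin 2) F) := by
    rw [← map_mul, mul_inv_cancel₀ hw, map_one]
  have e2 : (C t : MvPolynomial (Fin 2) F) = C (w 0) * C (w 1)⁻¹ := by
    rw [← map_mul, ← div_eq_mul_inv]
  rw [hfac, linFormVanishingAt, e2]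
  linear_combination -(X 0 * q.homogenize m) * e1

lemma _root_.MvPolynomial.IsHomogeneous.exists_eq_linFormVanishingAt_mul
    (hG : G.IsHomogeneous (m + 1)) (hw : w ≠ 0) (h : eval w G = 0) :
    ∃ H, H.IsHomogeneous m ∧ G = L w * H := by
  rcases ne_or_eq (w 1) 0 with hw1 | hw1
  · exact exists_eq_linFormVanishingAt_mul_of_ne_zero hG hw1 h
  -- otherwise swap the coordinates, so that the second one of `w` is nonzero
  set σ := Equiv.swap (0 : Fin 2) 1
  have hσσ : ⇑σ ∘ ⇑σ = id := funext (Equiv.swap_apply_self 0 1)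
  have hw0 : (w ∘ σ) 1 ≠ 0 := fun h0 => hw (by ext i; fin_cases i <;> simp_all [σ])
  obtain ⟨H, hH, hGH⟩ := exists_eq_linFormVanishingAt_mul_of_ne_zero
    (hG.rename_isHomogeneous (f := σ)) hw0 (by rwa [eval_rename, Function.comp_assoc, hσσ])
  refine ⟨-rename σ H, hH.rename_isHomogeneous.neg, ?_⟩
  have := congrArg (rename σ) hGH
  rw [rename_rename, hσσ, rename_id_apply] at this
  rw [this, map_mul]
  simp [linFormVanishingAt, σ]
  ring

lemma _root_.MvPolynomial.IsHomogeneous.exists_eval_eq_zero [IsAlgClosed F]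
    (hG : G.IsHomogeneous n) (hn : n ≠ 0) : ∃ v ≠ 0, eval v G = 0 := by
  by_cases hdeg : (dehomogenize G).degree = 0
  · refine ⟨![1, 0], fun h => one_ne_zero (congrFun h 0), ?_⟩
    rw [← homogenize_dehomogenize hG, Polynomial.eq_C_of_degree_eq_zero hdeg,
      Polynomial.homogenize_C]
    simp [hn]
  · obtain ⟨t, ht⟩ := IsAlgClosed.exists_root _ hdeg
    exact ⟨![t, 1], fun h => one_ne_zero (congrFun h 1), by rwa [← eval_dehomogenize hG]⟩

def zeroLocus (G : MvPolynomial (Fin 2) F) : Set (P1 F) :=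
  {p | eval p.rep G = 0}

lemma mk_mem_zeroLocus (hG : G.IsHomogeneous n) (hv : v ≠ 0) :
    Projectivization.mk F v hv ∈ zeroLocus G ↔ eval v G = 0 := by
  obtain ⟨a, ha⟩ := Projectivization.exists_smul_eq_mk_rep F v hv
  rw [zeroLocus, Set.mem_ofPred_eq, ← ha, Units.smul_def, hG.eval_smul]
  simp [a.ne_zero]

lemma zeroLocus_zero : zeroLocus (0 : MvPolynomial (Fin 2) F) = Set.univ := by
  simp [zeroLocus]

lemma zeroLocus_mono (h : H ∣ G) : zeroLocus H ⊆ zeroLocus G := by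
  rintro p hp
  obtain ⟨K, rfl⟩ := h
  simp_all [zeroLocus]

lemma zeroLocus_mul : zeroLocus (G * H) = zeroLocus G ∪ zeroLocus H := by
  ext p
  simp [zeroLocus]

lemma zeroLocus_linFormVanishingAt (hw : w ≠ 0) :
    zeroLocus (L w) = {Projectivization.mk F w hw} := by
  ext p
  induction p using Projectivization.ind with
  | h v hv =>
    rw [mk_mem_zeroLocus (isHomogeneous_linFormVanishingAt w) hv, Set.mem_singleton_iff,
      mk_eq_mk_iff_eval_linFormVanishingAt]

lemma zeroLocus_finite (hG : G.IsHomogeneous n) (hG0 : G ≠ 0) : (zeroLocus G).Finite := by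
  induction n generalizing G with
  | zero =>
    convert Set.finite_empty
    refine Set.eq_empty_of_forall_notMem fun p hp => hG0 ?_
    rw [zeroLocus, Set.mem_ofPred_eq, hG.eq_C_coeff_zero, eval_C] at hp
    rw [hG.eq_C_coeff_zero, hp, map_zero]
  | succ m ih =>
    rcases (zeroLocus G).eq_empty_or_nonempty with h | ⟨p, hp⟩
    · simp [h]
    obtain ⟨H, hH, rfl⟩ := hG.exists_eq_linFormVanishingAt_mul p.rep_nonzero hp
    rw [zeroLocus_mul, zeroLocus_linFormVanishingAt p.rep_nonzero]
    exact (Set.finite_singleton _).union (ih hH (right_ne_zero_of_mul hG0))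

lemma zeroLocus_nonempty [IsAlgClosed F] (hG : G.IsHomogeneous n) (hn : n ≠ 0) :
    (zeroLocus G).Nonempty :=
  let ⟨_, hv, hGv⟩ := hG.exists_eval_eq_zero hn
  ⟨_, (mk_mem_zeroLocus hG hv).mpr hGv⟩

lemma eq_C_mul_pow_of_zeroLocus_subset [IsAlgClosed F] (hG : G.IsHomogeneous n) (hw : w ≠ 0)
    (h : zeroLocus G ⊆ {Projectivization.mk F w hw}) : ∃ c, G = C c * L w ^ n := by
  induction n generalizing G with
  | zero => exact ⟨coeff 0 G, by simpa using hG.eq_C_coeff_zero⟩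
  | succ m ih =>
    obtain ⟨v, hv, hGv⟩ := hG.exists_eval_eq_zero m.succ_ne_zero
    have hGw : eval w G = 0 := by
      have hv' := (mk_mem_zeroLocus hG hv).mpr hGv
      rwa [Set.mem_singleton_iff.mp (h hv'), mk_mem_zeroLocus hG hw] at hv'
    obtain ⟨H, hH, rfl⟩ := hG.exists_eq_linFormVanishingAt_mul hw hGw
    obtain ⟨c, rfl⟩ := ih hH ((zeroLocus_mono (dvd_mul_left _ _)).trans h)
    exact ⟨c, by ring⟩

lemma sq_dvd_of_zeroLocus_subset [IsAlgClosed F] (hG : G.IsHomogeneous n) (hn : 2 ≤ n)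
    (hw : w ≠ 0) (h : zeroLocus G ⊆ {Projectivization.mk F w hw}) : L w ^ 2 ∣ G := by
  obtain ⟨c, rfl⟩ := eq_C_mul_pow_of_zeroLocus_subset hG hw h
  exact (pow_dvd_pow _ hn).mul_left _

lemma exists_mem_zeroLocus_sub_ne_ne [IsAlgClosed F] {w' : Fin 2 → F} (hw : w ≠ 0)
    (hw' : w' ≠ 0) (hne : Projectivization.mk F w hw ≠ Projectivization.mk F w' hw')
    {c c' : F} (hc : c ≠ 0) (hc' : c' ≠ 0) (hn : n ≠ 0) :
    ∃ p ∈ zeroLocus (C c * L w ^ n - C c' * L w' ^ n),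
      p ≠ Projectivization.mk F w hw ∧ p ≠ Projectivization.mk F w' hw' := by
  have hH := ((isHomogeneous_linFormVanishingAt w).pow n).C_mul c |>.sub
    (((isHomogeneous_linFormVanishingAt w').pow n).C_mul c')
  rw [one_mul] at hH
  obtain ⟨p, hp⟩ := zeroLocus_nonempty hH hn
  have hww' : eval w (L w') ≠ 0 := (mk_eq_mk_iff_eval_linFormVanishingAt hw hw').not.mp hne
  have hw'w : eval w' (L w) ≠ 0 :=
    (mk_eq_mk_iff_eval_linFormVanishingAt hw' hw).not.mp (Ne.symm hne)
  refine ⟨p, hp, ?_, ?_⟩ <;> rintro rfl <;> rw [mk_mem_zeroLocus hH] at hp <;>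
    simp_all [eval_linFormVanishingAt_self, zero_pow hn]

end BinaryForm

open BinaryForm

section Dynamics

variable {F : Type*} [Field F] {d : ℕ} {Φ : Fin 2 → MvPolynomial (Fin 2) F} {v w : Fin 2 → F}

def fixForm (Φ : Fin 2 → MvPolynomial (Fin 2) F) : MvPolynomial (Fin 2) F :=
  X 1 * Φ 0 - X 0 * Φ 1

def fiberForm (Φ : Fin 2 → MvPolynomial (Fin 2) F) (w : Fin 2 → F) : MvPolynomial (Fin 2) F :=
  C (w 1) * Φ 0 - C (w 0) * Φ 1

lemma isHomogeneous_fixForm (hhom : ∀ i, (Φ i).IsHomogeneous d) :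
    (fixForm Φ).IsHomogeneous (d + 1) := by
  rw [add_comm]
  exact ((isHomogeneous_X F 1).mul (hhom 0)).sub ((isHomogeneous_X F 0).mul (hhom 1))

lemma isHomogeneous_fiberForm (hhom : ∀ i, (Φ i).IsHomogeneous d) (w : Fin 2 → F) :
    (fiberForm Φ w).IsHomogeneous d :=
  ((hhom 0).C_mul _).sub ((hhom 1).C_mul _)

lemma linFormVanishingAt_mul_eq (w : Fin 2 → F) (i : Fin 2) :
    L w * Φ i = X i * fiberForm Φ w - C (w i) * fixForm Φ := by
  fin_cases i <;> simp [linFormVanishingAt, fiberForm, fixForm] <;> ring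

lemma linFormVanishingAt_mul_fiberForm_sub (w w' : Fin 2 → F) :
    L w' * fiberForm Φ w - L w * fiberForm Φ w' = C (eval w (L w')) * fixForm Φ := by
  simp only [linFormVanishingAt, fiberForm, fixForm, map_sub, map_mul, eval_C, eval_X]
  ring

lemma eval_ne_zero_of_isRelPrime (hd : d ≠ 0) (hhom : ∀ i, (Φ i).IsHomogeneous d)
    (hrel : IsRelPrime (Φ 0) (Φ 1)) (hv : v ≠ 0) : (fun i => eval v (Φ i)) ≠ 0 := by
  intro h
  obtain ⟨m, rfl⟩ := Nat.exists_eq_succ_of_ne_zero hd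
  obtain ⟨_, -, h0⟩ := (hhom 0).exists_eq_linFormVanishingAt_mul hv (congrFun h 0)
  obtain ⟨_, -, h1⟩ := (hhom 1).exists_eq_linFormVanishingAt_mul hv (congrFun h 1)
  exact not_isUnit_linFormVanishingAt v (hrel ⟨_, h0⟩ ⟨_, h1⟩)

lemma evalMap_mk (hd : d ≠ 0) (hhom : ∀ i, (Φ i).IsHomogeneous d)
    (hrel : IsRelPrime (Φ 0) (Φ 1)) (hv : v ≠ 0) :
    evalMap Φ (Projectivization.mk F v hv) =
      Projectivization.mk F (fun i => eval v (Φ i))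
        (eval_ne_zero_of_isRelPrime hd hhom hrel hv) := by
  obtain ⟨a, ha⟩ := Projectivization.exists_smul_eq_mk_rep F v hv
  have hrep : (fun i => eval (Projectivization.mk F v hv).rep (Φ i)) =
      ((a : F) ^ d) • fun i => eval v (Φ i) := by
    ext i
    rw [← ha, Units.smul_def, (hhom i).eval_smul, Pi.smul_apply, smul_eq_mul]
  have hne : (fun i => eval (Projectivization.mk F v hv).rep (Φ i)) ≠ 0 := by
    rw [hrep]
    exact smul_ne_zero (pow_ne_zero _ a.ne_zero) (eval_ne_zero_of_isRelPrime hd hhom hrel hv)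
  rw [evalMap, dif_pos hne, Projectivization.mk_eq_mk_iff]
  exact ⟨a ^ d, by rw [hrep, Units.smul_def, Units.val_pow_eq_pow_val]⟩

lemma fixSet_eq_zeroLocus (hd : d ≠ 0) (hhom : ∀ i, (Φ i).IsHomogeneous d)
    (hrel : IsRelPrime (Φ 0) (Φ 1)) : FixSet Φ = zeroLocus (fixForm Φ) := by
  ext p
  induction p using Projectivization.ind with
  | h v hv =>
    rw [mk_mem_zeroLocus (isHomogeneous_fixForm hhom) hv, FixSet, Set.mem_ofPred_eq,
      evalMap_mk hd hhom hrel, mk_eq_mk_iff_eval_linFormVanishingAt, eval_linFormVanishingAt]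
    simp [fixForm]

lemma preimage_evalMap_singleton (hd : d ≠ 0) (hhom : ∀ i, (Φ i).IsHomogeneous d)
    (hrel : IsRelPrime (Φ 0) (Φ 1)) (hw : w ≠ 0) :
    evalMap Φ ⁻¹' {Projectivization.mk F w hw} = zeroLocus (fiberForm Φ w) := by
  ext p
  induction p using Projectivization.ind with
  | h v hv =>
    rw [mk_mem_zeroLocus (isHomogeneous_fiberForm hhom w) hv, Set.mem_preimage,
      Set.mem_singleton_iff, evalMap_mk hd hhom hrel, mk_eq_mk_iff_eval_linFormVanishingAt,
      eval_linFormVanishingAt]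
    simp [fiberForm]

lemma not_sq_dvd_fixForm_and_fiberForm (hrel : IsRelPrime (Φ 0) (Φ 1)) (hw : w ≠ 0) :
    ¬(L w ^ 2 ∣ fixForm Φ ∧ L w ^ 2 ∣ fiberForm Φ w) := by
  rintro ⟨hfix, hfib⟩
  have hdvd (i : Fin 2) : L w ∣ Φ i := by
    refine (mul_dvd_mul_iff_left (linFormVanishingAt_ne_zero hw)).mp ?_
    rw [← sq, linFormVanishingAt_mul_eq]
    exact (hfib.mul_left _).sub (hfix.mul_left _)
  exact not_isUnit_linFormVanishingAt w (hrel (hdvd 0) (hdvd 1))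

variable [IsAlgClosed F]

lemma fixForm_ne_zero (hd : 2 ≤ d) (hhom : ∀ i, (Φ i).IsHomogeneous d)
    (hrel : IsRelPrime (Φ 0) (Φ 1)) : fixForm Φ ≠ 0 := by
  intro h0
  have hw : (![1, 0] : Fin 2 → F) ≠ 0 := fun h => one_ne_zero (congrFun h 0)
  refine not_sq_dvd_fixForm_and_fiberForm hrel hw ⟨h0 ▸ dvd_zero _, ?_⟩
  refine sq_dvd_of_zeroLocus_subset (isHomogeneous_fiberForm hhom _) hd hw ?_
  rw [← preimage_evalMap_singleton (by omega) hhom hrel hw]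
  intro p hp
  have hfix : p ∈ FixSet Φ := by
    simp [fixSet_eq_zeroLocus (by omega) hhom hrel, h0, zeroLocus_zero]
  rwa [Set.mem_preimage, hfix] at hp

lemma fiberForm_ne_zero (hd : d ≠ 0) (hhom : ∀ i, (Φ i).IsHomogeneous d)
    (hrel : IsRelPrime (Φ 0) (Φ 1)) (hw : w ≠ 0) : fiberForm Φ w ≠ 0 := by
  intro h0
  refine not_sq_dvd_fixForm_and_fiberForm hrel hw ⟨?_, h0 ▸ dvd_zero _⟩
  refine sq_dvd_of_zeroLocus_subset (isHomogeneous_fixForm hhom) (by omega) hw ?_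
  rw [← fixSet_eq_zeroLocus hd hhom hrel]
  intro p hp
  have hfib : p ∈ evalMap Φ ⁻¹' {Projectivization.mk F w hw} := by
    simp [preimage_evalMap_singleton hd hhom hrel, h0, zeroLocus_zero]
  rwa [Set.mem_preimage, hp] at hfib

lemma fixSet_finite (hd : 2 ≤ d) (hhom : ∀ i, (Φ i).IsHomogeneous d)
    (hrel : IsRelPrime (Φ 0) (Φ 1)) : (FixSet Φ).Finite := by
  rw [fixSet_eq_zeroLocus (by omega) hhom hrel]
  exact zeroLocus_finite (isHomogeneous_fixForm hhom) (fixForm_ne_zero hd hhom hrel)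

lemma fixSet_nonempty (hd : d ≠ 0) (hhom : ∀ i, (Φ i).IsHomogeneous d)
    (hrel : IsRelPrime (Φ 0) (Φ 1)) : (FixSet Φ).Nonempty := by
  rw [fixSet_eq_zeroLocus hd hhom hrel]
  exact zeroLocus_nonempty (isHomogeneous_fixForm hhom) d.succ_ne_zero

lemma evalMap_surjective (hd : d ≠ 0) (hhom : ∀ i, (Φ i).IsHomogeneous d)
    (hrel : IsRelPrime (Φ 0) (Φ 1)) : Function.Surjective (evalMap Φ) := by
  intro x
  induction x using Projectivization.ind with
  | h w hw =>
    obtain ⟨p, hp⟩ := zeroLocus_nonempty (isHomogeneous_fiberForm hhom w) hd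
    rw [← preimage_evalMap_singleton hd hhom hrel hw] at hp
    exact ⟨p, hp⟩

lemma preimage_evalMap_finite (hd : d ≠ 0) (hhom : ∀ i, (Φ i).IsHomogeneous d)
    (hrel : IsRelPrime (Φ 0) (Φ 1)) {S : Set (P1 F)} (hS : S.Finite) :
    (evalMap Φ ⁻¹' S).Finite := by
  rw [← Set.biUnion_of_singleton S, Set.preimage_iUnion₂]
  refine hS.biUnion fun x _ => ?_
  induction x using Projectivization.ind with
  | h w hw =>
    rw [preimage_evalMap_singleton hd hhom hrel hw]
    exact zeroLocus_finite (isHomogeneous_fiberForm hhom w) (fiberForm_ne_zero hd hhom hrel hw)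

lemma exists_fiberForm_eq_of_preimage_subset (hd : d ≠ 0) (hhom : ∀ i, (Φ i).IsHomogeneous d)
    (hrel : IsRelPrime (Φ 0) (Φ 1)) (hw : w ≠ 0)
    (h : evalMap Φ ⁻¹' {Projectivization.mk F w hw} ⊆ {Projectivization.mk F w hw}) :
    ∃ c ≠ 0, fiberForm Φ w = C c * L w ^ d := by
  rw [preimage_evalMap_singleton hd hhom hrel hw] at h
  obtain ⟨c, hc⟩ := eq_C_mul_pow_of_zeroLocus_subset (isHomogeneous_fiberForm hhom w) hw h
  refine ⟨c, fun hc0 => fiberForm_ne_zero hd hhom hrel hw ?_, hc⟩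
  rw [hc, hc0, map_zero, zero_mul]

lemma exists_ne_evalMap_eq_of_fixSet_subset (hd : 2 ≤ d) (hhom : ∀ i, (Φ i).IsHomogeneous d)
    (hrel : IsRelPrime (Φ 0) (Φ 1)) {x : P1 F} (hx : FixSet Φ ⊆ {x}) :
    ∃ z ≠ x, evalMap Φ z = x := by
  induction x using Projectivization.ind with
  | h w hw =>
    by_contra! h
    refine not_sq_dvd_fixForm_and_fiberForm hrel hw ⟨?_, ?_⟩
    · rw [fixSet_eq_zeroLocus (by omega) hhom hrel] at hx
      exact sq_dvd_of_zeroLocus_subset (isHomogeneous_fixForm hhom) (by omega) hw hx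
    · refine sq_dvd_of_zeroLocus_subset (isHomogeneous_fiberForm hhom w) hd hw ?_
      rw [← preimage_evalMap_singleton (by omega) hhom hrel hw]
      intro z hz
      by_contra hzw
      exact h z hzw hz

lemma not_preimage_fixSet_subset_of_fixSet_eq_pair (hd : 2 ≤ d)
    (hhom : ∀ i, (Φ i).IsHomogeneous d) (hrel : IsRelPrime (Φ 0) (Φ 1)) {x y : P1 F}
    (hxy : x ≠ y) (hfix : FixSet Φ = {x, y}) : ¬evalMap Φ ⁻¹' FixSet Φ ⊆ FixSet Φ := by
  intro hsub
  have hown (a : P1 F) (ha : a ∈ FixSet Φ) : evalMap Φ ⁻¹' {a} ⊆ {a} := fun z hz => by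
    have hzfix : evalMap Φ z = z := hsub (by rwa [Set.mem_preimage, Set.mem_singleton_iff.mp hz])
    rwa [Set.mem_preimage, hzfix] at hz
  induction x using Projectivization.ind with | h w hw => ?_
  induction y using Projectivization.ind with | h w' hw' => ?_
  obtain ⟨c, hc, hcw⟩ := exists_fiberForm_eq_of_preimage_subset (by omega) hhom hrel hw
    (hown _ (by simp [hfix]))
  obtain ⟨c', hc', hcw'⟩ := exists_fiberForm_eq_of_preimage_subset (by omega) hhom hrel hw'
    (hown _ (by simp [hfix]))
  obtain ⟨m, rfl⟩ : ∃ m, d = m + 1 + 1 := ⟨d - 2, by omega⟩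
  obtain ⟨p, hp, hpx, hpy⟩ := exists_mem_zeroLocus_sub_ne_ne hw hw' hxy hc hc' m.succ_ne_zero
  have hδ : eval w (L w') ≠ 0 := (mk_eq_mk_iff_eval_linFormVanishingAt hw hw').not.mp hxy
  -- `linFormVanishingAt_mul_fiberForm_sub` now reads `L w * L w' * H = C δ * fixForm Φ`
  have hdvd : C c * L w ^ (m + 1) - C c' * L w' ^ (m + 1) ∣ fixForm Φ := by
    refine ((hδ.isUnit.map C).dvd_mul_left).mp ⟨L w * L w', ?_⟩
    rw [← linFormVanishingAt_mul_fiberForm_sub, hcw, hcw']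
    ring
  have hpfix : p ∈ FixSet Φ := by
    rw [fixSet_eq_zeroLocus (by omega) hhom hrel]
    exact zeroLocus_mono hdvd hp
  rw [hfix] at hpfix
  rcases hpfix with rfl | rfl <;> contradiction

lemma three_le_ncard_preimage_fixSet (hd : 2 ≤ d) (hhom : ∀ i, (Φ i).IsHomogeneous d)
    (hrel : IsRelPrime (Φ 0) (Φ 1)) (h2 : (FixSet Φ).ncard = 2) :
    3 ≤ (evalMap Φ ⁻¹' FixSet Φ).ncard := by
  obtain ⟨x, y, hxy, hfix⟩ := Set.ncard_eq_two.mp h2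
  have hsub : FixSet Φ ⊆ evalMap Φ ⁻¹' FixSet Φ := fun p hp => by
    rwa [Set.mem_preimage, hp]
  have hssub := hsub.ssubset_of_not_subset
    (not_preimage_fixSet_subset_of_fixSet_eq_pair hd hhom hrel hxy hfix)
  have hlt := Set.ncard_lt_ncard hssub
    (preimage_evalMap_finite (by omega) hhom hrel (fixSet_finite hd hhom hrel))
  omega

lemma two_le_ncard_preimage_and_three_le_ncard_preimage_iterate (hd : 2 ≤ d)
    (hhom : ∀ i, (Φ i).IsHomogeneous d) (hrel : IsRelPrime (Φ 0) (Φ 1)) {x : P1 F}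
    (hfix : FixSet Φ = {x}) :
    2 ≤ (evalMap Φ ⁻¹' {x}).ncard ∧ 3 ≤ ((evalMap Φ)^[2] ⁻¹' {x}).ncard := by
  have hx : evalMap Φ x = x := (hfix ▸ rfl : x ∈ FixSet Φ)
  obtain ⟨z, hzx, hz⟩ := exists_ne_evalMap_eq_of_fixSet_subset hd hhom hrel hfix.subset
  obtain ⟨u, hu⟩ := evalMap_surjective (by omega) hhom hrel z
  have hfin := preimage_evalMap_finite (by omega) hhom hrel (Set.finite_singleton x)
  refine ⟨(Set.one_lt_ncard_iff hfin).mpr ⟨z, x, hz, hx, hzx⟩,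
    (Set.two_lt_ncard_iff (preimage_evalMap_finite (by omega) hhom hrel hfin)).mpr
      ⟨u, z, x, ?_, ?_, ?_, ?_, ?_, hzx⟩⟩
  · show evalMap Φ (evalMap Φ u) = x
    rw [hu, hz]
  · show evalMap Φ (evalMap Φ z) = x
    rw [hz, hx]
  · show evalMap Φ (evalMap Φ x) = x
    rw [hx, hx]
  · rintro rfl
    exact hzx (hu.symm.trans hz)
  · rintro rfl
    exact hzx (hu.symm.trans hx)

end Dynamics

/-- over an algebraically closed field, if `φ` has exactly two
fixed points then their preimage set has at least three elements; if it has a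
unique fixed point `x` then `φ⁻¹(x)` has at least two and `φ⁻²(x)` at least
three elements; consequently the invariant set `T_φ` always has at least three
elements. -/
theorem invariant_set_has_three_points
    {F : Type*} [Field F] [IsAlgClosed F]
    (d : ℕ) (hd : 2 ≤ d)
    (Φ : Fin 2 → MvPolynomial (Fin 2) F)
    (hhom : ∀ i, (Φ i).IsHomogeneous d)
    (hrel : IsRelPrime (Φ 0) (Φ 1)) :
    ((FixSet Φ).ncard = 2 → 3 ≤ (evalMap Φ ⁻¹' FixSet Φ).ncard) ∧
    (∀ x : P1 F, FixSet Φ = {x} →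
      2 ≤ (evalMap Φ ⁻¹' {x}).ncard ∧ 3 ≤ ((evalMap Φ)^[2] ⁻¹' {x}).ncard) ∧
    3 ≤ (Tset Φ).ncard := by
  have hpair := three_le_ncard_preimage_fixSet hd hhom hrel
  have hsingle (x : P1 F) :=
    two_le_ncard_preimage_and_three_le_ncard_preimage_iterate hd hhom hrel (x := x)
  refine ⟨hpair, hsingle, ?_⟩
  have hpos :=
    (Set.ncard_pos (fixSet_finite hd hhom hrel)).mpr (fixSet_nonempty (by omega) hhom hrel)
  unfold Tset
  split_ifs with h3 h2
  · exact h3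
  · exact hpair h2
  · obtain ⟨x, hx⟩ := Set.ncard_eq_one.mp (by omega : (FixSet Φ).ncard = 1)
    rw [hx]
    exact (hsingle x hx).2
end
end
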